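/- Let J, a, b, τ be real numbers and H = J Z⊗Z + a Z⊗I + b I⊗Z. The syncopated pair (XX-CPMG, XXXX) — X pulses on qubit 0 after the first and third quarter-intervals and X pulses on qubit 1 after every quarter-interval, i.e., combined pulses X⊗X, I⊗X, X⊗X, I⊗X in time order — refocuses this Hamiltonian exactly: (I⊗X)·exp(−iτH)·(X⊗X)·exp(−iτH)·(I⊗X)·exp(−iτH)·(X⊗X)·exp(−iτH) = I⊗I, the 4×4 identity matrix, for every real τ. Together with the analogous identities for the pairs (XX-CPMG, XX) and (XX, XXXX), this shows that the three sequences XX, XX-CPMG and XXXX pairwise syncopate, so they suffice to remove all ZZ crosstalks on any 3-colorable crosstalk graph. -/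

import Mathlib

open Matrix Kronecker NormedSpace

noncomputable section

/-- Pauli X matrix. -/
def PX : Matrix (Fin 2) (Fin 2) ℂ := !![0, 1; 1, 0]
/-- Pauli Y matrix. -/
def PY : Matrix (Fin 2) (Fin 2) ℂ := !![0, -Complex.I; Complex.I, 0]
/-- Pauli Z matrix. -/
def PZ : Matrix (Fin 2) (Fin 2) ℂ := !![1, 0; 0, -1]
/-- 2×2 identity matrix. -/
def PI : Matrix (Fin 2) (Fin 2) ℂ := 1

/-- Two-qubit operators: 4×4 matrices indexed by `Fin 2 × Fin 2`. -/
abbrev Mat4 := Matrix (Fin 2 × Fin 2) (Fin 2 × Fin 2) ℂ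

/-! The Hamiltonian is diagonal, and conjugating by `X` on a qubit flips the sign of every term
containing `Z` on that qubit. Since the pulses are involutions, the sequence `P E Q E P E Q E`
equals the product of the toggling-frame propagators `(P E P) (PQ E PQ) (Q E Q) E`, which are
exponentials of four sign-flipped copies of `-iτH`. These commute, and for each of the three
sequences `{P, PQ, Q}` runs over `X⊗I, I⊗X, X⊗X`, so every sign pattern occurs exactly once and
the exponents sum to zero. -/

namespace Matrix

variable {n m k : Type*} [Fintype n] [DecidableEq n]

theorem IsDiag.commute {R : Type*} [CommSemiring R] {A B : Matrix n n R}
    (hA : A.IsDiag) (hB : B.IsDiag) : Commute A B := by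
  rw [← hA.diagonal_diag, ← hB.diagonal_diag]
  exact commute_diagonal _ _

theorem mul_exp_mul_of_mul_self {𝔸 : Type*} [NormedCommRing 𝔸] [NormedAlgebra ℚ 𝔸]
    [CompleteSpace 𝔸] {P : Matrix n n 𝔸} (hP : P * P = 1) (A : Matrix n n 𝔸) :
    P * exp A * P = exp (P * A * P) := by
  have hinv : P⁻¹ = P := inv_eq_left_inv hP
  simpa only [hinv] using (exp_conj P A ⟨⟨P, P, hP, hP⟩, rfl⟩).symm

variable [Fintype m] [Fintype k] {R : Type*} [CommSemiring R]

theorem kronecker_mul_mul_kronecker (A C : Matrix m m R) (B D : Matrix k k R) :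
    (A ⊗ₖ B) * (C ⊗ₖ D) * (A ⊗ₖ B) = (A * C * A) ⊗ₖ (B * D * B) := by
  rw [← mul_kronecker_mul, ← mul_kronecker_mul]

theorem kronecker_mul_self_eq_one [DecidableEq m] [DecidableEq k] {A : Matrix m m R}
    {B : Matrix k k R} (hA : A * A = 1) (hB : B * B = 1) : (A ⊗ₖ B) * (A ⊗ₖ B) = 1 := by
  rw [← mul_kronecker_mul, hA, hB, one_kronecker_one]

end Matrix

theorem toggling_frame_decomposition {M : Type*} [Monoid M] {P Q : M} (hP : P * P = 1)
    (hQ : Q * Q = 1) (E : M) :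
    P * E * Q * E * P * E * Q * E = (P * E * P) * (P * Q * E * (P * Q)) * (Q * E * Q) * E := by
  simp only [mul_assoc]
  rw [← mul_assoc P P, hP, one_mul, ← mul_assoc Q Q, hQ, one_mul]

lemma PI_mul (A : Matrix (Fin 2) (Fin 2) ℂ) : PI * A = A := one_mul A

lemma mul_PI (A : Matrix (Fin 2) (Fin 2) ℂ) : A * PI = A := mul_one A

lemma PI_mul_PI : PI * PI = PI := PI_mul PI

lemma PX_mul_PX : PX * PX = PI := by
  ext i j; fin_cases i <;> fin_cases j <;> simp [PX, PI]

lemma PI_mul_PZ_mul_PI : PI * PZ * PI = (1 : ℂ) • PZ := by rw [PI_mul, mul_PI, one_smul]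

lemma PX_mul_PZ_mul_PX : PX * PZ * PX = (-1 : ℂ) • PZ := by
  ext i j; fin_cases i <;> fin_cases j <;> simp [PX, PZ]

lemma isDiag_PZ : PZ.IsDiag := by
  intro i j h; fin_cases i <;> fin_cases j <;> simp_all [PZ]

def zzHamiltonian (J a b : ℂ) : Mat4 := J • (PZ ⊗ₖ PZ) + a • (PZ ⊗ₖ PI) + b • (PI ⊗ₖ PZ)

lemma isDiag_zzHamiltonian (J a b : ℂ) : (zzHamiltonian J a b).IsDiag :=
  (((isDiag_PZ.kronecker isDiag_PZ).smul J).add ((isDiag_PZ.kronecker isDiag_one).smul a)).add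
    ((isDiag_one.kronecker isDiag_PZ).smul b)

lemma zzHamiltonian_add (J a b J' a' b' : ℂ) :
    zzHamiltonian J a b + zzHamiltonian J' a' b' = zzHamiltonian (J + J') (a + a') (b + b') := by
  simp only [zzHamiltonian, add_smul]
  abel

lemma smul_zzHamiltonian (c J a b : ℂ) :
    c • zzHamiltonian J a b = zzHamiltonian (c * J) (c * a) (c * b) := by
  simp only [zzHamiltonian, smul_add, smul_smul]

lemma zzHamiltonian_zero : zzHamiltonian 0 0 0 = 0 := by
  simp only [zzHamiltonian, zero_smul, add_zero]

lemma exp_zzHamiltonian_mul_exp_zzHamiltonian (J a b J' a' b' : ℂ) :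
    exp (zzHamiltonian J a b) * exp (zzHamiltonian J' a' b') =
      exp (zzHamiltonian (J + J') (a + a') (b + b')) := by
  rw [← zzHamiltonian_add, exp_add_of_commute _ _
    ((isDiag_zzHamiltonian _ _ _).commute (isDiag_zzHamiltonian _ _ _))]

section Conjugation

variable {A B : Matrix (Fin 2) (Fin 2) ℂ} {s t : ℂ}

lemma kronecker_mul_zzHamiltonian_mul_kronecker (hA : A * A = 1) (hB : B * B = 1)
    (hAZ : A * PZ * A = s • PZ) (hBZ : B * PZ * B = t • PZ) (J a b : ℂ) :
    (A ⊗ₖ B) * zzHamiltonian J a b * (A ⊗ₖ B) = zzHamiltonian (s * t * J) (s * a) (t * b) := by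
  have hAI : A * PI * A = PI := by rw [mul_PI, hA, PI]
  have hBI : B * PI * B = PI := by rw [mul_PI, hB, PI]
  simp only [zzHamiltonian, mul_add, add_mul, mul_smul_comm, smul_mul_assoc,
    kronecker_mul_mul_kronecker, hAZ, hBZ, hAI, hBI, smul_kronecker, kronecker_smul, smul_smul]
  ring_nf

lemma kronecker_mul_exp_zzHamiltonian_mul_kronecker (hA : A * A = 1) (hB : B * B = 1)
    (hAZ : A * PZ * A = s • PZ) (hBZ : B * PZ * B = t • PZ) (J a b : ℂ) :
    (A ⊗ₖ B) * exp (zzHamiltonian J a b) * (A ⊗ₖ B) =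
      exp (zzHamiltonian (s * t * J) (s * a) (t * b)) := by
  rw [mul_exp_mul_of_mul_self (kronecker_mul_self_eq_one hA hB),
    kronecker_mul_zzHamiltonian_mul_kronecker hA hB hAZ hBZ]

end Conjugation

lemma PX_PI_mul_exp_zzHamiltonian_mul (J a b : ℂ) :
    (PX ⊗ₖ PI) * exp (zzHamiltonian J a b) * (PX ⊗ₖ PI) = exp (zzHamiltonian (-J) (-a) b) := by
  rw [kronecker_mul_exp_zzHamiltonian_mul_kronecker PX_mul_PX PI_mul_PI PX_mul_PZ_mul_PX
    PI_mul_PZ_mul_PI]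
  ring_nf

lemma PI_PX_mul_exp_zzHamiltonian_mul (J a b : ℂ) :
    (PI ⊗ₖ PX) * exp (zzHamiltonian J a b) * (PI ⊗ₖ PX) = exp (zzHamiltonian (-J) a (-b)) := by
  rw [kronecker_mul_exp_zzHamiltonian_mul_kronecker PI_mul_PI PX_mul_PX PI_mul_PZ_mul_PI
    PX_mul_PZ_mul_PX]
  ring_nf

lemma PX_PX_mul_exp_zzHamiltonian_mul (J a b : ℂ) :
    (PX ⊗ₖ PX) * exp (zzHamiltonian J a b) * (PX ⊗ₖ PX) = exp (zzHamiltonian J (-a) (-b)) := by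
  rw [kronecker_mul_exp_zzHamiltonian_mul_kronecker PX_mul_PX PX_mul_PX PX_mul_PZ_mul_PX
    PX_mul_PZ_mul_PX]
  ring_nf

/-- The syncopated pair (XX-CPMG, XXXX), with combined pulses X⊗X, I⊗X, X⊗X, I⊗X in time
order, exactly refocuses `H = J Z⊗Z + a Z⊗I + b I⊗Z`; together with the analogous identities
for the pairs (XX-CPMG, XX) and (XX, XXXX), the three sequences XX, XX-CPMG and XXXX pairwise
syncopate. -/
theorem cpmg_with_xxxx_exactly_refocuses_and_pairwise_syncopation
    (J a b τ : ℝ) (H : Mat4)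
    (hH : H = (J : ℂ) • (PZ ⊗ₖ PZ) + (a : ℂ) • (PZ ⊗ₖ PI) + (b : ℂ) • (PI ⊗ₖ PZ)) :
    ((PI ⊗ₖ PX) * exp ((-(Complex.I * (τ : ℂ))) • H) *
      (PX ⊗ₖ PX) * exp ((-(Complex.I * (τ : ℂ))) • H) *
      (PI ⊗ₖ PX) * exp ((-(Complex.I * (τ : ℂ))) • H) *
      (PX ⊗ₖ PX) * exp ((-(Complex.I * (τ : ℂ))) • H) = PI ⊗ₖ PI) ∧
    ((PI ⊗ₖ PX) * exp ((-(Complex.I * (τ : ℂ))) • H) *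
      (PX ⊗ₖ PI) * exp ((-(Complex.I * (τ : ℂ))) • H) *
      (PI ⊗ₖ PX) * exp ((-(Complex.I * (τ : ℂ))) • H) *
      (PX ⊗ₖ PI) * exp ((-(Complex.I * (τ : ℂ))) • H) = PI ⊗ₖ PI) ∧
    ((PX ⊗ₖ PX) * exp ((-(Complex.I * (τ : ℂ))) • H) *
      (PI ⊗ₖ PX) * exp ((-(Complex.I * (τ : ℂ))) • H) *
      (PX ⊗ₖ PX) * exp ((-(Complex.I * (τ : ℂ))) • H) *
      (PI ⊗ₖ PX) * exp ((-(Complex.I * (τ : ℂ))) • H) = PI ⊗ₖ PI) := by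
  have hI : PI ⊗ₖ PI = 1 := by rw [PI, one_kronecker_one]
  rw [hH, ← zzHamiltonian, smul_zzHamiltonian, hI]
  refine ⟨?_, ?_, ?_⟩ <;>
  · rw [toggling_frame_decomposition ?_ ?_]
    · simp only [← mul_kronecker_mul, PX_mul_PX, PI_mul, mul_PI, PX_PI_mul_exp_zzHamiltonian_mul,
        PI_PX_mul_exp_zzHamiltonian_mul, PX_PX_mul_exp_zzHamiltonian_mul,
        exp_zzHamiltonian_mul_exp_zzHamiltonian]
      ring_nf
      rw [zzHamiltonian_zero, exp_zero]
    all_goals simp only [← mul_kronecker_mul, PX_mul_PX, PI_mul_PI, hI]
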